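/- Let u_T : ℝ → ℝ be Lipschitz. Then there exists a Lipschitz function u0 : ℝ → ℝ with S_T^+ u0 = u_T (i.e. I_T(u_T) is nonempty) if and only if u_T satisfies the inequality ∂ₓₓu_T − (T·H''(∂ₓu_T))⁻¹ ≤ 0 on ℝ in the viscosity sense. -/

import Mathlib

/-!
Write `L` for the Legendre transform of `H`. The functions `x ↦ c + T * L ((x - y) / T)` are the
cones out of which `S_T^+` builds its infima, and `u_T` lies in the range of `S_T^+` exactly when
every point of its graph is touched from above by such a cone: one direction takes a minimiser
`y` in the Hopf–Lax formula, the other takes `u0 = S_T^- u_T`.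

A cone `ψ` satisfies `ψ'' = 1 / (T * H''(ψ'))`, so a touching cone passes the viscosity
inequality on to `u_T`. Conversely, fix `x0`. The cones through `(x0, u_T x0)` that stay above
`u_T` to the right of `x0`, and those that stay above it to the left, form two closed families,
both nonempty by the Lipschitz bound. They cover all cones: if `u_T` crossed a cone on both
sides, it would still cross the cone built with a slightly smaller time `s < T`, which is a strict
supersolution `ψ'' > 1 / (T * H''(ψ'))`, and `u_T - ψ` would have an interior minimum violating
the viscosity inequality. By connectedness the two families share a cone, which touches `u_T`
at `x0`.
-/

open Filter

noncomputable section

/-- A real function is Lipschitz (with some constant). -/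
def IsLip1 (f : ℝ → ℝ) : Prop := ∃ K : NNReal, LipschitzWith K f

/-- The Legendre transform `L(q) = sup_p (q·p - H(p))`. -/
def legendre1 (H : ℝ → ℝ) (q : ℝ) : ℝ := ⨆ p : ℝ, (q * p - H p)

/-- The forward Hopf–Lax operator `(S_T^+ g)(x) = inf_y [g(y) + T·L((x-y)/T)]`. -/
def Splus1 (T : ℝ) (L : ℝ → ℝ) (g : ℝ → ℝ) (x : ℝ) : ℝ :=
  ⨅ y : ℝ, (g y + T * L ((x - y) / T))

/-- The backward operator `(S_T^- g)(x) = sup_y [g(y) - T·L((y-x)/T)]`. -/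
def Sminus1 (T : ℝ) (L : ℝ → ℝ) (g : ℝ → ℝ) (x : ℝ) : ℝ :=
  ⨆ y : ℝ, (g y - T * L ((y - x) / T))

/-- `u_T` satisfies `∂ₓₓ u_T - (T·H''(∂ₓ u_T))⁻¹ ≤ 0` on `ℝ` in the viscosity sense:
for every `C²` test function `φ` and every local minimum point `x0` of `u_T - φ`,
`φ''(x0) ≤ 1/(T·H''(φ'(x0)))`. -/
def ViscIneq1 (T : ℝ) (H : ℝ → ℝ) (uT : ℝ → ℝ) : Prop :=
  ∀ φ : ℝ → ℝ, ContDiff ℝ 2 φ → ∀ x0 : ℝ,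
    IsLocalMin (fun x => uT x - φ x) x0 →
    deriv (deriv φ) x0 ≤ 1 / (T * deriv (deriv H) (deriv φ x0))

open Set Topology

theorem ConvexOn.add_deriv_mul_sub_le {S : Set ℝ} {f : ℝ → ℝ} (hf : ConvexOn ℝ S f) {x y : ℝ}
    (hx : x ∈ S) (hy : y ∈ S) (hd : DifferentiableAt ℝ f x) :
    f x + deriv f x * (y - x) ≤ f y := by
  rcases lt_trichotomy x y with hxy | rfl | hyx
  · have h := hf.deriv_le_slope hx hy hxy hd
    rw [slope_def_field, le_div_iff₀ (sub_pos.2 hxy)] at h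
    linarith
  · simp
  · have h := hf.slope_le_deriv hy hx hyx hd
    rw [slope_def_field, div_le_iff₀ (sub_pos.2 hyx)] at h
    linarith

theorem IsLocalMin.deriv_deriv_nonneg {f : ℝ → ℝ} {x : ℝ} (h : IsLocalMin f x)
    (hc : ContinuousAt f x) : 0 ≤ deriv (deriv f) x := by
  by_contra! hneg
  have hconst : f =ᶠ[𝓝 x] fun _ => f x :=
    (h.and (isLocalMax_of_deriv_deriv_neg hneg h.deriv_eq_zero hc)).mono
      fun y hy => le_antisymm hy.2 hy.1
  have hderiv : deriv f =ᶠ[𝓝 x] fun _ => 0 :=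
    hconst.eventuallyEq_nhds.mono fun y hy => by rw [hy.deriv_eq, deriv_const]
  simp [hderiv.deriv_eq] at hneg

theorem IsLocalMin.deriv_eq_and_deriv_deriv_le {f g : ℝ → ℝ} {x : ℝ}
    (hf : ContDiff ℝ 2 f) (hg : ContDiff ℝ 2 g) (h : IsLocalMin (fun y => f y - g y) x) :
    deriv g x = deriv f x ∧ deriv (deriv g) x ≤ deriv (deriv f) x := by
  have hf1 : Differentiable ℝ f := hf.differentiable (by norm_num)
  have hg1 : Differentiable ℝ g := hg.differentiable (by norm_num)
  have hd : deriv (fun y => f y - g y) = fun y => deriv f y - deriv g y :=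
    funext fun y => deriv_fun_sub (hf1 y) (hg1 y)
  constructor
  · have h1 := h.deriv_eq_zero
    rw [hd] at h1
    linarith
  · have h2 := h.deriv_deriv_nonneg (hf1.continuous.sub hg1.continuous).continuousAt
    rw [hd, deriv_fun_sub (hf.differentiable_deriv_two x) (hg.differentiable_deriv_two x)] at h2
    linarith

structure IsTonelli (H : ℝ → ℝ) : Prop where
  contDiff : ContDiff ℝ 2 H
  deriv_deriv_pos : ∀ p, 0 < deriv (deriv H) p
  superlinear : Tendsto (fun p => H p / |p|) (cocompact ℝ) atTop

def invDeriv (H : ℝ → ℝ) : ℝ → ℝ := Function.invFun (deriv H)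

namespace IsTonelli

variable {H : ℝ → ℝ}

theorem differentiable (hH : IsTonelli H) : Differentiable ℝ H :=
  hH.contDiff.differentiable (by norm_num)

theorem hasDerivAt_deriv (hH : IsTonelli H) (p : ℝ) :
    HasDerivAt (deriv H) (deriv (deriv H) p) p :=
  (hH.contDiff.differentiable_deriv_two p).hasDerivAt

theorem continuous_deriv_deriv (hH : IsTonelli H) : Continuous (deriv (deriv H)) :=
  (hH.contDiff.deriv' (n := 1)).continuous_deriv_one

theorem strictMono_deriv (hH : IsTonelli H) : StrictMono (deriv H) :=
  strictMono_of_deriv_pos hH.deriv_deriv_pos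

theorem convexOn (hH : IsTonelli H) : ConvexOn ℝ univ H :=
  hH.strictMono_deriv.monotone.convexOn_univ_of_deriv hH.differentiable

theorem surjective_deriv (hH : IsTonelli H) : Function.Surjective (deriv H) := by
  intro q
  have hcoercive : Tendsto (fun p => H p - q * p) (cocompact ℝ) atTop := by
    refine tendsto_atTop_mono' _ ?_ tendsto_norm_cocompact_atTop
    filter_upwards [hH.superlinear.eventually_ge_atTop (|q| + 1),
      tendsto_norm_cocompact_atTop.eventually_gt_atTop 0] with p hp hp0
    rw [Real.norm_eq_abs] at hp0 ⊢
    rw [le_div_iff₀ hp0] at hp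
    have hqp : q * p ≤ |q| * |p| := (le_abs_self _).trans (abs_mul q p).le
    nlinarith
  obtain ⟨p, hp⟩ := (hH.differentiable.continuous.sub (continuous_const_mul q)).exists_forall_le
    hcoercive
  have hmin : IsLocalMin (fun p => H p - q * p) p := (isMinOn_univ_iff.2 hp).isLocalMin univ_mem
  refine ⟨p, ?_⟩
  have := hmin.hasDerivAt_eq_zero ((hH.differentiable p).hasDerivAt.sub
    ((hasDerivAt_id p).const_mul q))
  linarith

theorem deriv_invDeriv (hH : IsTonelli H) (q : ℝ) : deriv H (invDeriv H q) = q :=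
  Function.invFun_eq (hH.surjective_deriv q)

theorem invDeriv_deriv (hH : IsTonelli H) (p : ℝ) : invDeriv H (deriv H p) = p :=
  Function.leftInverse_invFun hH.strictMono_deriv.injective p

theorem monotone_invDeriv (hH : IsTonelli H) : Monotone (invDeriv H) := fun a b hab =>
  hH.strictMono_deriv.le_iff_le.mp (by rwa [hH.deriv_invDeriv, hH.deriv_invDeriv])

theorem continuous_invDeriv (hH : IsTonelli H) : Continuous (invDeriv H) :=
  hH.monotone_invDeriv.continuous_of_surjective fun p => ⟨deriv H p, hH.invDeriv_deriv p⟩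

theorem hasDerivAt_invDeriv (hH : IsTonelli H) (q : ℝ) :
    HasDerivAt (invDeriv H) (deriv (deriv H) (invDeriv H q))⁻¹ q :=
  .of_local_left_inverse hH.continuous_invDeriv.continuousAt (hH.hasDerivAt_deriv _)
    (hH.deriv_deriv_pos _).ne' (.of_forall hH.deriv_invDeriv)

theorem contDiff_invDeriv (hH : IsTonelli H) : ContDiff ℝ 1 (invDeriv H) := by
  refine contDiff_one_iff_deriv.2 ⟨fun q => (hH.hasDerivAt_invDeriv q).differentiableAt, ?_⟩
  rw [funext fun q => (hH.hasDerivAt_invDeriv q).deriv]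
  exact (hH.continuous_deriv_deriv.comp hH.continuous_invDeriv).inv₀
    fun q => (hH.deriv_deriv_pos _).ne'

theorem mul_sub_le_mul_invDeriv_sub (hH : IsTonelli H) (q p : ℝ) :
    q * p - H p ≤ q * invDeriv H q - H (invDeriv H q) := by
  have := hH.convexOn.add_deriv_mul_sub_le (mem_univ _) (mem_univ p)
    (hH.differentiable (invDeriv H q))
  rw [hH.deriv_invDeriv] at this
  linarith

theorem legendre1_eq (hH : IsTonelli H) (q : ℝ) :
    legendre1 H q = q * invDeriv H q - H (invDeriv H q) :=
  le_antisymm (ciSup_le (hH.mul_sub_le_mul_invDeriv_sub q))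
    (le_ciSup ⟨_, forall_mem_range.2 (hH.mul_sub_le_mul_invDeriv_sub q)⟩ (invDeriv H q))

theorem le_legendre1 (hH : IsTonelli H) (q p : ℝ) : q * p - H p ≤ legendre1 H q :=
  hH.legendre1_eq q ▸ hH.mul_sub_le_mul_invDeriv_sub q p

theorem legendre1_deriv (hH : IsTonelli H) (p : ℝ) :
    legendre1 H (deriv H p) = deriv H p * p - H p := by
  rw [hH.legendre1_eq, hH.invDeriv_deriv]

theorem legendre1_superlinear (hH : IsTonelli H) (K : ℝ) :
    ∃ C, ∀ q, K * |q| - C ≤ legendre1 H q := by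
  refine ⟨max (H K) (H (-K)), fun q => ?_⟩
  rcases le_total 0 q with hq | hq
  · have := hH.le_legendre1 q K
    rw [abs_of_nonneg hq]
    linarith [le_max_left (H K) (H (-K))]
  · have := hH.le_legendre1 q (-K)
    rw [abs_of_nonpos hq]
    linarith [le_max_right (H K) (H (-K))]

theorem hasDerivAt_legendre1 (hH : IsTonelli H) (q : ℝ) :
    HasDerivAt (legendre1 H) (invDeriv H q) q := by
  rw [funext hH.legendre1_eq]
  have hP := hH.hasDerivAt_invDeriv q
  refine (((hasDerivAt_id' q).mul hP).sub
    ((hH.differentiable _).hasDerivAt.comp q hP)).congr_deriv ?_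
  rw [hH.deriv_invDeriv]
  ring

theorem contDiff_legendre1 (hH : IsTonelli H) : ContDiff ℝ 2 (legendre1 H) :=
  (contDiff_succ_iff_deriv (n := 1)).2
    ⟨fun q => (hH.hasDerivAt_legendre1 q).differentiableAt, by simp,
    by rw [funext fun q => (hH.hasDerivAt_legendre1 q).deriv]; exact hH.contDiff_invDeriv⟩

end IsTonelli

/-- With vertex `y = x0 - s * q` this is `x ↦ (c - s * L q) + s * L ((x - y) / s)`, one of the
functions over which `Splus1 s L` takes its infimum, normalised to pass through `(x0, c)`. -/
def hopfLaxCone (L : ℝ → ℝ) (s x0 c q x : ℝ) : ℝ := c + s * (L ((x - x0) / s + q) - L q)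

def IsTouchedByHopfLaxCones (T : ℝ) (L u : ℝ → ℝ) : Prop :=
  ∀ x0, ∃ q, ∀ z, u z ≤ hopfLaxCone L T x0 (u x0) q z

section HopfLax

variable {T : ℝ} {L : ℝ → ℝ}

@[simp]
theorem hopfLaxCone_self (L : ℝ → ℝ) (s x0 c q : ℝ) : hopfLaxCone L s x0 c q x0 = c := by
  simp [hopfLaxCone]

theorem contDiff_hopfLaxCone (hL : ContDiff ℝ 2 L) (s x0 c q : ℝ) :
    ContDiff ℝ 2 (hopfLaxCone L s x0 c q) :=
  contDiff_const.add (contDiff_const.mul ((hL.comp (by fun_prop)).sub contDiff_const))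

theorem continuous_hopfLaxCone_slope (hL : Continuous L) (s x0 c x : ℝ) :
    Continuous fun q => hopfLaxCone L s x0 c q x := by
  unfold hopfLaxCone
  fun_prop

theorem continuousAt_hopfLaxCone_scale (hL : Continuous L) {s : ℝ} (hs : s ≠ 0)
    (x0 c q x : ℝ) :
    ContinuousAt (fun t => hopfLaxCone L t x0 c q x) s := by
  unfold hopfLaxCone
  fun_prop (disch := exact hs)

theorem sub_add_abs_sub_le_hopfLax (hT : 0 < T) {K : NNReal} {C : ℝ}
    (hC : ∀ q, (K + 1) * |q| - C ≤ L q) {g : ℝ → ℝ} (hg : LipschitzWith K g) (x y : ℝ) :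
    g x - T * C + |x - y| ≤ g y + T * L ((x - y) / T) := by
  have hL := mul_le_mul_of_nonneg_left (hC ((x - y) / T)) hT.le
  have hscale : T * ((K + 1) * |(x - y) / T| - C) = (K + 1) * |x - y| - T * C := by
    rw [abs_div, abs_of_pos hT]
    field_simp
  have hgxy := hg.le_add_mul x y
  rw [Real.dist_eq] at hgxy
  linarith

theorem isTouchedByHopfLaxCones_splus1 (hT : 0 < T) (hLc : Continuous L)
    (hLs : ∀ K, ∃ C, ∀ q, K * |q| - C ≤ L q) {u0 : ℝ → ℝ} (hu0 : IsLip1 u0) :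
    IsTouchedByHopfLaxCones T L (Splus1 T L u0) := by
  obtain ⟨K, hK⟩ := hu0
  obtain ⟨C, hC⟩ := hLs (K + 1)
  have hlow := sub_add_abs_sub_le_hopfLax hT hC hK
  have hbdd : ∀ x, BddBelow (range fun y => u0 y + T * L ((x - y) / T)) := fun x =>
    ⟨u0 x - T * C, forall_mem_range.2 fun y => by linarith [hlow x y, abs_nonneg (x - y)]⟩
  intro x0
  have hcoercive : Tendsto (fun y => u0 y + T * L ((x0 - y) / T)) (cocompact ℝ) atTop :=
    tendsto_atTop_mono (hlow x0) (tendsto_atTop_add_const_left _ _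
      ((tendsto_dist_left_cocompact_atTop x0).congr (Real.dist_eq x0)))
  obtain ⟨y0, hy0⟩ := (hK.continuous.add
    (continuous_const.mul (hLc.comp (by fun_prop)))).exists_forall_le hcoercive
  have hx0 : Splus1 T L u0 x0 = u0 y0 + T * L ((x0 - y0) / T) :=
    le_antisymm (ciInf_le (hbdd x0) y0) (le_ciInf hy0)
  refine ⟨(x0 - y0) / T, fun z => ?_⟩
  have hz : Splus1 T L u0 z ≤ u0 y0 + T * L ((z - y0) / T) := ciInf_le (hbdd z) y0
  rw [hopfLaxCone, hx0, show (z - x0) / T + (x0 - y0) / T = (z - y0) / T by ring]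
  linarith

theorem exists_splus1_eq_of_isTouchedByHopfLaxCones (hT : 0 < T)
    (hLs : ∀ K, ∃ C, ∀ q, K * |q| - C ≤ L q) {u : ℝ → ℝ} (hu : IsLip1 u)
    (htouch : IsTouchedByHopfLaxCones T L u) : ∃ u0, IsLip1 u0 ∧ Splus1 T L u0 = u := by
  obtain ⟨K, hK⟩ := hu
  obtain ⟨C, hC⟩ := hLs (K + 1)
  have hlow := sub_add_abs_sub_le_hopfLax hT hC hK
  have hbdd : ∀ y, BddAbove (range fun z => u z - T * L ((z - y) / T)) := fun y =>
    ⟨u y + T * C, forall_mem_range.2 fun z => by linarith [hlow z y, abs_nonneg (z - y)]⟩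
  have hle : ∀ x y, u x - T * L ((x - y) / T) ≤ Sminus1 T L u y := fun x y =>
    le_ciSup (hbdd y) x
  refine ⟨Sminus1 T L u, ⟨K, LipschitzWith.of_le_add_mul K fun y y' => ?_⟩,
    funext fun x => ?_⟩
  · -- translating the maximiser by `y' - y` compares the two suprema
    refine ciSup_le fun z => ?_
    have h := hle (z + (y' - y)) y'
    have hKz := hK.le_add_mul z (z + (y' - y))
    rw [show z + (y' - y) - y' = z - y by ring] at h
    rw [Real.dist_eq, show z - (z + (y' - y)) = y - y' by ring] at hKz
    rw [Real.dist_eq]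
    linarith
  · obtain ⟨q, hq⟩ := htouch x
    have hvertex : ∀ z, (z - (x - T * q)) / T = (z - x) / T + q := fun z => by
      field_simp
      ring
    have hsup : Sminus1 T L u (x - T * q) ≤ u x - T * L q := ciSup_le fun z => by
      have := hq z
      rw [hopfLaxCone] at this
      rw [hvertex]
      linarith
    refine le_antisymm ?_ (le_ciInf fun y => by linarith [hle x y])
    calc Splus1 T L (Sminus1 T L u) x
        ≤ Sminus1 T L u (x - T * q) + T * L ((x - (x - T * q)) / T) :=
          ciInf_le ⟨u x, forall_mem_range.2 fun y => by linarith [hle x y]⟩ _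
      _ ≤ u x := by rw [hvertex, sub_self, zero_div, zero_add]; linarith

end HopfLax

theorem hasDerivAt_sub_div_add (x0 s q x : ℝ) :
    HasDerivAt (fun x => (x - x0) / s + q) s⁻¹ x := by
  simpa using ((hasDerivAt_id x).sub_const x0).div_const s |>.add_const q

namespace IsTonelli

variable {H : ℝ → ℝ} {T s : ℝ}

theorem hasDerivAt_hopfLaxCone (hH : IsTonelli H) (hs : s ≠ 0) (x0 c q x : ℝ) :
    HasDerivAt (hopfLaxCone (legendre1 H) s x0 c q) (invDeriv H ((x - x0) / s + q)) x := by
  have hL := (hH.hasDerivAt_legendre1 _).comp x (hasDerivAt_sub_div_add x0 s q x)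
  refine ((hL.sub_const _).const_mul s |>.const_add c).congr_deriv ?_
  field_simp

theorem deriv_hopfLaxCone (hH : IsTonelli H) (hs : s ≠ 0) (x0 c q : ℝ) :
    deriv (hopfLaxCone (legendre1 H) s x0 c q) = fun x => invDeriv H ((x - x0) / s + q) :=
  funext fun x => (hH.hasDerivAt_hopfLaxCone hs x0 c q x).deriv

theorem deriv_deriv_hopfLaxCone (hH : IsTonelli H) (hs : s ≠ 0) (x0 c q x : ℝ) :
    deriv (deriv (hopfLaxCone (legendre1 H) s x0 c q)) x =
      (s * deriv (deriv H) (deriv (hopfLaxCone (legendre1 H) s x0 c q) x))⁻¹ := by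
  rw [hH.deriv_hopfLaxCone hs]
  exact ((hH.hasDerivAt_invDeriv _).comp x (hasDerivAt_sub_div_add x0 s q x)).deriv.trans
    (by beta_reduce; ring)

theorem add_mul_sub_le_hopfLaxCone (hH : IsTonelli H) (hs : 0 < s) (x0 c p x : ℝ) :
    c + p * (x - x0) ≤ hopfLaxCone (legendre1 H) s x0 c (deriv H p) x := by
  have key : p * (x - x0) =
      s * (((x - x0) / s + deriv H p) * p - H p - (deriv H p * p - H p)) := by
    field_simp
    ring
  rw [hopfLaxCone, hH.legendre1_deriv, key]
  gcongr
  exact hH.le_legendre1 _ p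

theorem viscIneq1_of_isTouchedByHopfLaxCones (hH : IsTonelli H) (hT : 0 < T) {u : ℝ → ℝ}
    (htouch : IsTouchedByHopfLaxCones T (legendre1 H) u) : ViscIneq1 T H u := by
  intro φ hφ x0 hmin
  obtain ⟨q, hq⟩ := htouch x0
  have hcone_min : IsLocalMin (fun x => hopfLaxCone (legendre1 H) T x0 (u x0) q x - φ x) x0 :=
    Eventually.mono hmin fun x hx => by simp only [hopfLaxCone_self]; linarith [hq x]
  obtain ⟨hd1, hd2⟩ :=
    hcone_min.deriv_eq_and_deriv_deriv_le (contDiff_hopfLaxCone hH.contDiff_legendre1 ..) hφ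
  rwa [hd1, one_div, ← hH.deriv_deriv_hopfLaxCone hT.ne']

theorem le_hopfLaxCone_left_or_right (hH : IsTonelli H) (hT : 0 < T) {u : ℝ → ℝ}
    (hu : Continuous u) (hvisc : ViscIneq1 T H u) {x0 z1 z2 : ℝ} (hz1 : z1 < x0) (hz2 : x0 < z2)
    (q : ℝ) :
    u z1 ≤ hopfLaxCone (legendre1 H) T x0 (u x0) q z1 ∨
      u z2 ≤ hopfLaxCone (legendre1 H) T x0 (u x0) q z2 := by
  by_contra! ⟨h1, h2⟩
  have hperturb : ∀ z, hopfLaxCone (legendre1 H) T x0 (u x0) q z < u z →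
      ∀ᶠ s in 𝓝[<] T, hopfLaxCone (legendre1 H) s x0 (u x0) q z < u z := fun z h =>
    nhdsWithin_le_nhds ((continuousAt_hopfLaxCone_scale hH.contDiff_legendre1.continuous hT.ne'
      x0 (u x0) q z).eventually (eventually_lt_nhds h))
  obtain ⟨s, ⟨hs0, hsT⟩, hs1, hs2⟩ :=
    (Eventually.and (Ioo_mem_nhdsLT hT) ((hperturb z1 h1).and (hperturb z2 h2))).exists
  set φ := hopfLaxCone (legendre1 H) s x0 (u x0) q
  have hφ : ContDiff ℝ 2 φ := contDiff_hopfLaxCone hH.contDiff_legendre1 ..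
  have hend : ∀ z, φ z < u z → (u - φ) x0 < (u - φ) z := fun z h => by simpa [φ] using h
  obtain ⟨x, -, hmin⟩ := isCompact_Icc.exists_isLocalMin_mem_open Ioo_subset_Icc_self
    (hu.sub hφ.continuous).continuousOn ⟨hz1.le, hz2.le⟩ (fun z hz => by
      rw [Icc_sdiff_Ioo_same (hz1.trans hz2).le] at hz
      rcases hz with rfl | rfl
      exacts [hend _ hs1, hend _ hs2])
    isOpen_Ioo
  have hineq := hvisc φ hφ x hmin
  rw [hH.deriv_deriv_hopfLaxCone hs0.ne', one_div] at hineq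
  have ha := hH.deriv_deriv_pos (deriv φ x)
  exact hineq.not_gt (inv_strictAnti₀ (mul_pos hs0 ha) (mul_lt_mul_of_pos_right hsT ha))

theorem isTouchedByHopfLaxCones_of_viscIneq1 (hH : IsTonelli H) (hT : 0 < T) {u : ℝ → ℝ}
    (hu : IsLip1 u) (hvisc : ViscIneq1 T H u) : IsTouchedByHopfLaxCones T (legendre1 H) u := by
  obtain ⟨K, hK⟩ := hu
  intro x0
  set cone := hopfLaxCone (legendre1 H) T x0 (u x0)
  have hclosed : ∀ S : Set ℝ, IsClosed {q | ∀ z ∈ S, u z ≤ cone q z} := fun S => by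
    simp only [ofPred_forall]
    exact isClosed_biInter fun z _ => isClosed_le continuous_const
      (continuous_hopfLaxCone_slope hH.contDiff_legendre1.continuous T x0 (u x0) z)
  set right := {q | ∀ z ∈ Ici x0, u z ≤ cone q z}
  set left := {q | ∀ z ∈ Iic x0, u z ≤ cone q z}
  have hcover : univ ⊆ right ∪ left := by
    intro q _
    by_contra hq
    simp only [mem_union, right, left, mem_ofPred_eq, not_or, not_forall, not_le, mem_Ici,
      mem_Iic, exists_prop] at hq
    obtain ⟨⟨z2, hz2, h2⟩, ⟨z1, hz1, h1⟩⟩ := hq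
    have hne : ∀ z, cone q z < u z → z ≠ x0 := by
      rintro z h rfl
      simp [cone] at h
    rcases hH.le_hopfLaxCone_left_or_right hT hK.continuous hvisc (hz1.lt_of_ne (hne z1 h1))
      (hz2.lt_of_ne' (hne z2 h2)) q with h | h <;> linarith
  have hright : deriv H K ∈ right := fun z hz => by
    have := hK.le_add_mul z x0
    rw [Real.dist_eq, abs_of_nonneg (sub_nonneg.2 hz)] at this
    linarith [hH.add_mul_sub_le_hopfLaxCone hT x0 (u x0) K z]
  have hleft : deriv H (-K) ∈ left := fun z hz => by
    have := hK.le_add_mul z x0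
    rw [Real.dist_eq, abs_of_nonpos (sub_nonpos.2 hz)] at this
    linarith [hH.add_mul_sub_le_hopfLaxCone hT x0 (u x0) (-K) z]
  obtain ⟨q, -, hqr, hql⟩ := isPreconnected_closed_iff.1 isPreconnected_univ right left
    (hclosed _) (hclosed _) hcover ⟨_, trivial, hright⟩ ⟨_, trivial, hleft⟩
  exact ⟨q, fun z => (le_total x0 z).elim (hqr z) (hql z)⟩

end IsTonelli

/-- In one space dimension, `I_T(u_T)` is nonempty iff `u_T` satisfies
`∂ₓₓ u_T - (T·H''(∂ₓ u_T))⁻¹ ≤ 0` in the viscosity sense. -/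
theorem reachable_iff_viscosity_ineq_1D
    (T : ℝ) (hT : 0 < T)
    (H : ℝ → ℝ) (hH : ContDiff ℝ 2 H)
    (hHconv : ∀ p : ℝ, 0 < deriv (deriv H) p)
    (hHsuper : Tendsto (fun p : ℝ => H p / |p|) (cocompact ℝ) atTop)
    (uT : ℝ → ℝ) (huT : IsLip1 uT) :
    (∃ u0 : ℝ → ℝ, IsLip1 u0 ∧ Splus1 T (legendre1 H) u0 = uT) ↔ ViscIneq1 T H uT := by
  have hTonelli : IsTonelli H := ⟨hH, hHconv, hHsuper⟩
  constructor
  · rintro ⟨u0, hu0, rfl⟩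
    exact hTonelli.viscIneq1_of_isTouchedByHopfLaxCones hT
      (isTouchedByHopfLaxCones_splus1 hT hTonelli.contDiff_legendre1.continuous
        hTonelli.legendre1_superlinear hu0)
  · intro hvisc
    exact exists_splus1_eq_of_isTouchedByHopfLaxCones hT hTonelli.legendre1_superlinear huT
      (hTonelli.isTouchedByHopfLaxCones_of_viscIneq1 hT huT hvisc)
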